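/- arXiv:2507.02348 — 2 statements merged into one kernel-verified Lean document; each statement's English description precedes it below -/
import Mathlib

section
/- (Fractional programming equivalence) Let $a_k \geq 0$ and $b_k > 0$ for $k = 1, \dots, K$ be functions of a variable $x$ ranging over a set $\mathcal{S}$. Then $\max_{x \in \mathcal{S}} \sum_k \frac{a_k(x)}{b_k(x)} = \max_{x \in \mathcal{S}, q \in \mathbb{R}^K} \sum_k \left( 2 q_k \sqrt{a_k(x)} - q_k^2 b_k(x) \right)$, and for fixed $x$ the inner maximum over $q$ is attained at $q_k = \sqrt{a_k(x)}/b_k(x)$. -/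
lemma quad_le_ratio {A B q : ℝ} (hA : 0 ≤ A) (hB : 0 < B) :
    2 * q * Real.sqrt A - q ^ 2 * B ≤ A / B := by
  have hs : Real.sqrt A ^ 2 = A := Real.sq_sqrt hA
  rw [le_div_iff₀ hB]
  nlinarith [sq_nonneg (Real.sqrt A - q * B)]

lemma quad_eq_ratio {A B : ℝ} (hA : 0 ≤ A) (hB : 0 < B) :
    2 * (Real.sqrt A / B) * Real.sqrt A - (Real.sqrt A / B) ^ 2 * B = A / B := by
  have hs : Real.sqrt A ^ 2 = A := Real.sq_sqrt hA
  have h2 : Real.sqrt A * Real.sqrt A = A := Real.mul_self_sqrt hA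
  field_simp
  linear_combination h2

/-- fractional programming / sum-of-ratios quadratic transform:
for `a k x ≥ 0` and `b k x > 0` on `S`, the supremum of the sum of ratios over `S`
equals the supremum over `(x, q)` of the quadratic transform, and for fixed `x` the
inner maximum over `q` is attained at `q k = √(a k x) / b k x`. -/
theorem fractional_programming_equivalence {X : Type*} (K : ℕ) (S : Set X)
    (hS : S.Nonempty) (a b : Fin K → X → ℝ)
    (ha : ∀ k, ∀ x ∈ S, 0 ≤ a k x) (hb : ∀ k, ∀ x ∈ S, 0 < b k x)
    (hbdd : BddAbove ((fun x => ∑ k, a k x / b k x) '' S)) :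
    sSup ((fun x => ∑ k, a k x / b k x) '' S) =
      sSup {r : ℝ | ∃ x ∈ S, ∃ q : Fin K → ℝ,
        r = ∑ k, (2 * q k * Real.sqrt (a k x) - (q k) ^ 2 * b k x)} ∧
    ∀ x ∈ S, ∀ q : Fin K → ℝ,
      ∑ k, (2 * q k * Real.sqrt (a k x) - (q k) ^ 2 * b k x) ≤
        ∑ k, (2 * (Real.sqrt (a k x) / b k x) * Real.sqrt (a k x) -
          (Real.sqrt (a k x) / b k x) ^ 2 * b k x) := by
  set T : Set ℝ := {r : ℝ | ∃ x ∈ S, ∃ q : Fin K → ℝ,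
        r = ∑ k, (2 * q k * Real.sqrt (a k x) - (q k) ^ 2 * b k x)} with hT
  have key : ∀ x ∈ S, ∀ q : Fin K → ℝ,
      ∑ k, (2 * q k * Real.sqrt (a k x) - (q k) ^ 2 * b k x) ≤ ∑ k, a k x / b k x := by
    intro x hx q
    exact Finset.sum_le_sum fun k _ => quad_le_ratio (ha k x hx) (hb k x hx)
  have heq : ∀ x ∈ S, ∑ k, (2 * (Real.sqrt (a k x) / b k x) * Real.sqrt (a k x) -
          (Real.sqrt (a k x) / b k x) ^ 2 * b k x) = ∑ k, a k x / b k x := by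
    intro x hx
    exact Finset.sum_congr rfl fun k _ => quad_eq_ratio (ha k x hx) (hb k x hx)
  have hsub : (fun x => ∑ k, a k x / b k x) '' S ⊆ T := by
    rintro r ⟨x, hx, rfl⟩
    exact ⟨x, hx, fun k => Real.sqrt (a k x) / b k x, (heq x hx).symm⟩
  have hne : T.Nonempty := by
    obtain ⟨x, hx⟩ := hS
    exact ⟨_, hsub ⟨x, hx, rfl⟩⟩
  have hub : ∀ r ∈ T, r ≤ sSup ((fun x => ∑ k, a k x / b k x) '' S) := by
    rintro r ⟨x, hx, q, rfl⟩
    exact le_trans (key x hx q) (le_csSup hbdd ⟨x, hx, rfl⟩)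
  constructor
  · apply le_antisymm
    · exact csSup_le_csSup ⟨_, hub⟩ (hS.image _) hsub
    · exact csSup_le hne hub
  · intro x hx q
    rw [heq x hx]
    exact key x hx q
end

section
/- (Bilinear transformation) Let $B \in \mathbb{C}^{M \times P}$, $C \in \mathbb{C}^{M \times N}$, $D \in \mathbb{C}^{N \times P}$. Then $B = CD$ holds if and only if there exist Hermitian positive semidefinite matrices $E \in \mathbb{C}^{M \times M}$ and $F \in \mathbb{C}^{P \times P}$ such that the block matrix $\begin{pmatrix} E & B & C \\ B^H & F & D^H \\ C^H & D & I_N \end{pmatrix}$ is positive semidefinite and $\mathrm{Tr}(E - C C^H) \leq 0$. -/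
open Matrix ComplexOrder

private lemma psd_trace_re_nonpos_eq_zero {n : ℕ} {A : Matrix (Fin n) (Fin n) ℂ}
    (hA : A.PosSemidef) (h : (A.trace).re ≤ 0) : A = 0 := by
  obtain ⟨Bm, rfl⟩ : ∃ Bm : Matrix (Fin n) (Fin n) ℂ, A = Bmᴴ * Bm := by
    open scoped MatrixOrder in
    obtain ⟨X, hX, -, hXA⟩ := CFC.exists_sqrt_of_isSelfAdjoint_of_quasispectrumRestricts
      hA.isHermitian (QuasispectrumRestricts.nnreal_of_nonneg hA.nonneg)
    exact ⟨X, by rw [← Matrix.star_eq_conjTranspose, hX.star_eq, hXA]⟩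
  rw [show Bm = 0 from ?_]; · simp
  have htr : (Bmᴴ * Bm).trace = ∑ i, ∑ j, (starRingEnd ℂ) (Bm j i) * Bm j i := by
    simp [Matrix.trace, Matrix.diag, Matrix.mul_apply, Matrix.conjTranspose_apply]
  rw [htr] at h
  simp only [Complex.re_sum] at h
  have hz : ∀ i ∈ Finset.univ, ∑ j, ((starRingEnd ℂ) (Bm j i) * Bm j i).re = 0 := by
    refine (Finset.sum_eq_zero_iff_of_nonneg fun i _ => Finset.sum_nonneg fun j _ => ?_).mp
      (le_antisymm h (Finset.sum_nonneg fun i _ => Finset.sum_nonneg fun j _ => ?_))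
    all_goals simpa [Complex.mul_re, Complex.conj_re, Complex.conj_im] using
      add_nonneg (mul_self_nonneg _) (mul_self_nonneg _)
  ext j i
  have := hz i (Finset.mem_univ i)
  have hji := (Finset.sum_eq_zero_iff_of_nonneg fun j _ => by
      simpa [Complex.mul_re, Complex.conj_re, Complex.conj_im] using
        add_nonneg (mul_self_nonneg (Bm j i).re) (mul_self_nonneg (Bm j i).im)).mp this j
      (Finset.mem_univ j)
  simp only [Complex.mul_re, Complex.conj_re, Complex.conj_im, neg_mul, sub_neg_eq_add] at hji
  have h1 : (Bm j i).re = 0 := by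
    nlinarith [mul_self_nonneg (Bm j i).re, mul_self_nonneg (Bm j i).im]
  have h2 : (Bm j i).im = 0 := by
    nlinarith [mul_self_nonneg (Bm j i).re, mul_self_nonneg (Bm j i).im]
  simp [Matrix.zero_apply, Complex.ext_iff, h1, h2]

/-- The 3×3 block matrix `[[E, B, C], [Bᴴ, F, Dᴴ], [Cᴴ, D, I]]` appearing in the
bilinear transformation lemma. -/
noncomputable def bilinearBlockMatrix {M N P : ℕ}
    (E : Matrix (Fin M) (Fin M) ℂ) (F : Matrix (Fin P) (Fin P) ℂ)
    (B : Matrix (Fin M) (Fin P) ℂ) (C : Matrix (Fin M) (Fin N) ℂ)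
    (D : Matrix (Fin N) (Fin P) ℂ) :
    Matrix (Fin M ⊕ (Fin P ⊕ Fin N)) (Fin M ⊕ (Fin P ⊕ Fin N)) ℂ :=
  Matrix.fromBlocks E (Matrix.fromCols B C)
    (Matrix.fromRows Bᴴ Cᴴ) (Matrix.fromBlocks F Dᴴ D (1 : Matrix (Fin N) (Fin N) ℂ))

/-- Bilinear transformation: `B = C D` iff there exist PSD matrices
`E`, `F` such that `[[E, B, C], [Bᴴ, F, Dᴴ], [Cᴴ, D, I_N]] ⪰ 0` and
`Tr(E - C Cᴴ) ≤ 0`. -/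
theorem bilinear_transformation {M N P : ℕ}
    (B : Matrix (Fin M) (Fin P) ℂ) (C : Matrix (Fin M) (Fin N) ℂ)
    (D : Matrix (Fin N) (Fin P) ℂ) :
    B = C * D ↔
      ∃ (E : Matrix (Fin M) (Fin M) ℂ) (F : Matrix (Fin P) (Fin P) ℂ),
        E.PosSemidef ∧ F.PosSemidef ∧
        (bilinearBlockMatrix E F B C D).PosSemidef ∧
        (Matrix.trace (E - C * Cᴴ)).re ≤ 0 := by
  constructor
  · rintro rfl
    refine ⟨C * Cᴴ, Dᴴ * D, posSemidef_self_mul_conjTranspose C,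
      posSemidef_conjTranspose_mul_self D, ?_, by simp⟩
    have hkey : bilinearBlockMatrix (C * Cᴴ) (Dᴴ * D) (C * D) C D =
        (fromRows C (fromRows Dᴴ (1 : Matrix (Fin N) (Fin N) ℂ))) *
        (fromRows C (fromRows Dᴴ (1 : Matrix (Fin N) (Fin N) ℂ)))ᴴ := by
      rw [conjTranspose_fromRows_eq_fromCols_conjTranspose,
        conjTranspose_fromRows_eq_fromCols_conjTranspose, fromRows_mul, fromRows_mul,
        mul_fromCols, mul_fromCols, mul_fromCols]
      simp only [bilinearBlockMatrix, conjTranspose_mul, conjTranspose_one,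
        conjTranspose_conjTranspose, Matrix.mul_one, Matrix.one_mul]
      rw [mul_fromCols, Matrix.mul_one]
      ext (i | i | i) (j | j | j) <;> rfl
    rw [hkey]
    exact posSemidef_self_mul_conjTranspose _
  · rintro ⟨E, F, hE, hF, hPSD, htr⟩
    set G := B - C * D with hG
    -- Key quadratic form inequality
    have hQ : ∀ (u : Fin M → ℂ) (v : Fin P → ℂ),
        0 ≤ star u ⬝ᵥ ((E - C * Cᴴ) *ᵥ u) +
          (star u ⬝ᵥ (G *ᵥ v) + star v ⬝ᵥ ((Bᴴ - Dᴴ * Cᴴ) *ᵥ u)) +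
          star v ⬝ᵥ (F *ᵥ v) := by
      intro u v
      have h := hPSD.dotProduct_mulVec_nonneg (Sum.elim u (Sum.elim v (-(Cᴴ *ᵥ u))))
      simp only [bilinearBlockMatrix, fromBlocks_mulVec, fromCols_mulVec_sumElim,
        fromRows_mulVec, Function.star_sumElim, sumElim_dotProduct_sumElim,
        mulVec_neg, one_mulVec, mulVec_mulVec, dotProduct_add, dotProduct_neg, neg_dotProduct,
        star_neg, Sum.elim_comp_inl, Sum.elim_comp_inr] at h
      simp only [hG, dotProduct_mulVec, star_mulVec, conjTranspose_conjTranspose,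
        conjTranspose_sub, conjTranspose_mul, sub_vecMul, vecMul_sub, vecMul_vecMul,
        sub_dotProduct, Matrix.one_mul] at h ⊢
      convert h using 1
      ring
    -- `E - C Cᴴ` is PSD, hence zero by the trace condition
    have hEC : (E - C * Cᴴ).PosSemidef := by
      refine .of_dotProduct_mulVec_nonneg (hE.1.sub (isHermitian_mul_conjTranspose_self C)) fun u => ?_
      simpa using hQ u 0
    have hE0 : E - C * Cᴴ = 0 := psd_trace_re_nonpos_eq_zero hEC htr
    have hQ2 : ∀ (u : Fin M → ℂ) (v : Fin P → ℂ),
        0 ≤ star u ⬝ᵥ (G *ᵥ v) + star v ⬝ᵥ ((Bᴴ - Dᴴ * Cᴴ) *ᵥ u) + star v ⬝ᵥ (F *ᵥ v) := by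
      intro u v
      have h := hQ u v
      rw [hE0] at h
      simpa [add_assoc] using h
    -- conclude `G *ᵥ v = 0` for all `v`
    have key : ∀ v : Fin P → ℂ, G *ᵥ v = 0 := by
      intro v
      set y := G *ᵥ v with hy
      set s := star y ⬝ᵥ y with hs
      suffices hs0 : s = 0 by exact dotProduct_star_self_eq_zero.mp hs0
      have hsnn : (0 : ℂ) ≤ s := dotProduct_star_self_nonneg y
      have him : s.im = 0 := ((Complex.le_def.mp hsnn).2).symm
      have hc : (0 : ℂ) ≤ star v ⬝ᵥ (F *ᵥ v) := hF.dotProduct_mulVec_nonneg v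
      have hcre : 0 ≤ (star v ⬝ᵥ (F *ᵥ v)).re := (Complex.le_def.mp hc).1
      have hGHt : Bᴴ - Dᴴ * Cᴴ = Gᴴ := by
        rw [hG, conjTranspose_sub, conjTranspose_mul]
      have hGy : star v ⬝ᵥ (Gᴴ *ᵥ y) = s := by
        rw [dotProduct_mulVec, ← star_mulVec, ← hy, hs]
      have hstep : ∀ t : ℝ,
          0 ≤ -(t : ℂ) * s + -(t : ℂ) * s + star v ⬝ᵥ (F *ᵥ v) := by
        intro t
        have h := hQ2 (-(t : ℂ) • y) v
        rw [hGHt] at h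
        have e1 : star (-(t : ℂ) • y) ⬝ᵥ (G *ᵥ v) = -(t : ℂ) * s := by
          rw [← hy, star_smul, smul_dotProduct, ← hs]
          simp [Complex.star_def, Complex.conj_ofReal, smul_eq_mul]
        have e2 : star v ⬝ᵥ (Gᴴ *ᵥ (-(t : ℂ) • y)) = -(t : ℂ) * s := by
          rw [mulVec_smul, dotProduct_smul, smul_eq_mul, hGy]
        rw [e1, e2] at h
        exact h
      have hre : ∀ t : ℝ, 0 ≤ -t * s.re + -t * s.re + (star v ⬝ᵥ (F *ᵥ v)).re := by
        intro t
        have := (Complex.le_def.mp (hstep t)).1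
        simpa [Complex.add_re, Complex.mul_re, Complex.neg_re, Complex.neg_im,
          Complex.ofReal_re, Complex.ofReal_im, him] using this
      have hsre : s.re ≤ 0 := by
        by_contra hpos
        push_neg at hpos
        set c := (star v ⬝ᵥ (F *ᵥ v)).re with hcdef
        have ht := hre ((c + 1) / (2 * s.re))
        have h2 : ((c + 1) / (2 * s.re)) * s.re = (c + 1) / 2 := by
          field_simp
        nlinarith [ht, h2]
      have hsre0 : s.re = 0 := le_antisymm hsre (Complex.le_def.mp hsnn).1
      exact Complex.ext hsre0 him
    have hG0 : G = 0 := by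
      ext i j
      have := congrFun (key (Pi.single j 1)) i
      simpa using this
    rw [← sub_eq_zero]
    exact hG0
end
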